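/- arXiv:1810.02317 — 4 statements merged into one kernel-verified Lean document; each statement's English description precedes it below -/
import Mathlib

section
/- Let V be a cocontinuous quantale and x, y ∈ V. If x ≫ y + ε for every ε ∈ V with ε ≫ 0, then x ≫ y. -/
/-- `WayAbove y x` means `y ≫ x`: for every nonempty downward-directed set `S`
with `sInf S ≤ x` there exists `s ∈ S` with `s ≤ y`. -/
def WayAbove {L : Type*} [CompleteLattice L] (y x : L) : Prop :=
  ∀ S : Set L, S.Nonempty → DirectedOn (· ≥ ·) S → sInf S ≤ x → ∃ s ∈ S, s ≤ y

/-- A complete lattice is cocontinuous if for every `x` the set `{y | y ≫ x}` is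
nonempty, downward-directed, and has infimum `x`. -/
def Cocontinuous (L : Type*) [CompleteLattice L] : Prop :=
  ∀ x : L, {y | WayAbove y x}.Nonempty ∧ DirectedOn (· ≥ ·) {y | WayAbove y x} ∧
    x = sInf {y | WayAbove y x}

theorem WayAbove.of_le {L : Type*} [CompleteLattice L] {y x x' : L} (hyx : WayAbove y x)
    (hx' : x' ≤ x) : WayAbove y x' :=
  fun S hS hdir hle => hyx S hS hdir (hle.trans hx')

theorem add_le_add_left_of_add_sInf {V : Type*} [CompleteLattice V] [AddCommMonoid V]
    (hdist : ∀ (a : V) (s : Set V), a + sInf s = ⨅ b ∈ s, a + b) (a : V) {b c : V}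
    (hbc : b ≤ c) : a + b ≤ a + c :=
  calc a + b = a + sInf {b, c} := by rw [sInf_pair, inf_eq_left.mpr hbc]
    _ = ⨅ d ∈ ({b, c} : Set V), a + d := hdist a {b, c}
    _ ≤ a + c := biInf_le _ (Set.mem_insert_of_mem b rfl)

theorem wayAbove_of_wayAbove_add {V : Type*} [CompleteLattice V] [AddCommMonoid V]
    (hbot : (⊥ : V) = 0)
    (hdist : ∀ (a : V) (s : Set V), a + sInf s = ⨅ b ∈ s, a + b)
    (hcocont : Cocontinuous V) (x y : V)
    (h : ∀ ε : V, WayAbove ε 0 → WayAbove x (y + ε)) : WayAbove x y := by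
  obtain ⟨ε, hε⟩ := (hcocont 0).1
  have hε₀ : (0 : V) ≤ ε := hbot ▸ bot_le
  have hy : y ≤ y + ε := by simpa only [add_zero] using add_le_add_left_of_add_sInf hdist y hε₀
  exact (h ε hε).of_le hy
end

section
/- Let V be a cocontinuous quantale. If ε ∈ V satisfies ε ≫ 0, then there exists δ ∈ V with δ ≫ 0 such that ε ≫ δ + δ. -/
section WayAbove

variable {L : Type*} [CompleteLattice L]

theorem WayAbove.mono {x x' y y' : L} (h : WayAbove y x) (hy : y ≤ y') (hx : x' ≤ x) :
    WayAbove y' x' := fun S hS hdir hinf ↦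
  let ⟨s, hs, hsy⟩ := h S hS hdir (hinf.trans hx)
  ⟨s, hs, hsy.trans hy⟩

theorem Cocontinuous.exists_wayAbove_between (hL : Cocontinuous L) {x y : L}
    (hy : WayAbove y x) : ∃ z, WayAbove z x ∧ WayAbove y z := by
  obtain ⟨hne, hdir, hinf⟩ := hL x
  let D : Set L := {w | ∃ z, WayAbove z x ∧ WayAbove w z}
  have hDne : D.Nonempty := by
    obtain ⟨z, hz⟩ := hne
    obtain ⟨w, hw⟩ := (hL z).1
    exact ⟨w, z, hz, hw⟩
  have hDdir : DirectedOn (· ≥ ·) D := by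
    rintro w₁ ⟨z₁, hz₁, hw₁⟩ w₂ ⟨z₂, hz₂, hw₂⟩
    obtain ⟨z, hz, hz₁z, hz₂z⟩ := hdir z₁ hz₁ z₂ hz₂
    obtain ⟨w, hw, hw₁w, hw₂w⟩ :=
      (hL z).2.1 w₁ (hw₁.mono le_rfl hz₁z) w₂ (hw₂.mono le_rfl hz₂z)
    exact ⟨w, ⟨z, hz, hw⟩, hw₁w, hw₂w⟩
  have hDinf : sInf D ≤ x := by
    rw [hinf]
    refine le_sInf fun z hz ↦ ?_
    rw [(hL z).2.2]
    exact sInf_le_sInf fun w hw ↦ ⟨z, hz, hw⟩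
  obtain ⟨w, ⟨z, hzx, hwz⟩, hwy⟩ := hy D hDne hDdir hDinf
  exact ⟨z, hzx, hwz.mono hwy le_rfl⟩

end WayAbove

section Quantale

variable {V : Type*} [CompleteLattice V] [AddCommMonoid V]

theorem isOrderedAddMonoid_of_add_sInf
    (hdist : ∀ (a : V) (s : Set V), a + sInf s = ⨅ b ∈ s, a + b) : IsOrderedAddMonoid V where
  add_le_add_left a b hab c := by
    rw [add_comm a, add_comm b, ← inf_eq_left.mpr hab, ← sInf_pair, hdist]
    exact iInf₂_le b (by simp)

theorem sInf_image_double_le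
    (hdist : ∀ (a : V) (s : Set V), a + sInf s = ⨅ b ∈ s, a + b)
    {A : Set V} (hA : DirectedOn (· ≥ ·) A) :
    sInf ((fun δ ↦ δ + δ) '' A) ≤ sInf A + sInf A := by
  have := isOrderedAddMonoid_of_add_sInf hdist
  have hsum : sInf A + sInf A = ⨅ δ ∈ A, ⨅ δ' ∈ A, δ + δ' := by
    rw [hdist]
    refine iInf_congr fun δ ↦ iInf_congr fun _ ↦ ?_
    rw [add_comm, hdist]
  rw [hsum]
  refine le_iInf₂ fun δ hδ ↦ le_iInf₂ fun δ' hδ' ↦ ?_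
  obtain ⟨δ'', hδ'', hδδ'', hδ'δ''⟩ := hA δ hδ δ' hδ'
  exact (sInf_le (Set.mem_image_of_mem _ hδ'')).trans (add_le_add hδδ'' hδ'δ'')

end Quantale

theorem exists_half_general {V : Type*} [CompleteLattice V] [AddCommMonoid V]
    (hdist : ∀ (a : V) (s : Set V), a + sInf s = ⨅ b ∈ s, a + b)
    (hcocont : Cocontinuous V) (ε : V) (hε : WayAbove ε 0) :
    ∃ δ : V, WayAbove δ 0 ∧ WayAbove ε (δ + δ) := by
  have := isOrderedAddMonoid_of_add_sInf hdist
  obtain ⟨hne, hdir, hinf⟩ := hcocont 0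
  obtain ⟨z, hz, hεz⟩ := hcocont.exists_wayAbove_between hε
  have hdoubles_dir : DirectedOn (· ≥ ·) ((fun δ : V ↦ δ + δ) '' {y | WayAbove y 0}) :=
    hdir.mono_comp fun _ _ h ↦ add_le_add h h
  have hdoubles_inf : sInf ((fun δ : V ↦ δ + δ) '' {y | WayAbove y 0}) ≤ 0 :=
    (sInf_image_double_le hdist hdir).trans_eq (by rw [← hinf, add_zero])
  obtain ⟨_, ⟨δ, hδ, rfl⟩, hδz⟩ := hz _ (hne.image _) hdoubles_dir hdoubles_inf
  exact ⟨δ, hδ, hεz.mono le_rfl hδz⟩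

theorem exists_half {V : Type*} [CompleteLattice V] [AddCommMonoid V]
    (hbot : (⊥ : V) = 0)
    (hdist : ∀ (a : V) (s : Set V), a + sInf s = ⨅ b ∈ s, a + b)
    (hcocont : Cocontinuous V) (ε : V) (hε : WayAbove ε 0) :
    ∃ δ : V, WayAbove δ 0 ∧ WayAbove ε (δ + δ) :=
  exists_half_general hdist hcocont ε hε
end

section
/- Let V be a cocontinuous quantale. Then for every y ∈ V, y = ⨅{y + ε : ε ∈ V, ε ≫ 0}. -/
theorem eq_sInf_add_wayAbove_zero_general {V : Type*} [CompleteLattice V] [AddCommMonoid V]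
    (hdist : ∀ (a : V) (s : Set V), a + sInf s = ⨅ b ∈ s, a + b)
    (hcocont : Cocontinuous V) (y : V) :
    y = sInf {z | ∃ ε : V, WayAbove ε 0 ∧ z = y + ε} := by
  obtain ⟨-, -, hzero⟩ := hcocont 0
  have himage : {z | ∃ ε : V, WayAbove ε 0 ∧ z = y + ε} = (y + ·) '' {ε | WayAbove ε 0} := by
    ext z
    simp [eq_comm]
  rw [himage, sInf_image, ← hdist, ← hzero, add_zero]

theorem eq_sInf_add_wayAbove_zero {V : Type*} [CompleteLattice V] [AddCommMonoid V]
    (hbot : (⊥ : V) = 0)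
    (hdist : ∀ (a : V) (s : Set V), a + sInf s = ⨅ b ∈ s, a + b)
    (hcocont : Cocontinuous V) (y : V) :
    y = sInf {z | ∃ ε : V, WayAbove ε 0 ∧ z = y + ε} :=
  eq_sInf_add_wayAbove_zero_general hdist hcocont y
end

section
/- Let V be a commutative quantale. Define d : V × V → V by d(x, y) = (y ∸ x) + (x ∸ y). Then d is a V-metric on V: d(x, x) = 0, d(x, y) = d(y, x), d(x, y) ≤ d(x, z) + d(z, y), and d(x, y) = 0 implies x = y. -/
/-- Truncated subtraction: `q ∸ p = ⨅ {r | p + r ≥ q}`. -/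
def qsub {V : Type*} [CompleteLattice V] [Add V] (q p : V) : V :=
  sInf {r | q ≤ p + r}

/-! Addition distributes over infima, so it is monotone and `q ≤ p + (q ∸ p)`. Chaining
`y ≤ z + (y ∸ z) ≤ x + (z ∸ x) + (y ∸ z)` gives `y ∸ x ≤ (z ∸ x) + (y ∸ z)`, and adding the
symmetric inequality yields the triangle inequality. Since `0 = ⊥`, `d(x, y) = 0` forces
`y ∸ x = x ∸ y = 0`, hence `y ≤ x` and `x ≤ y`. -/

section Quantale

variable {V : Type*} [CompleteLattice V] [AddCommMonoid V]

theorem addLeftMono_of_add_sInf (hdist : ∀ (a : V) (s : Set V), a + sInf s = ⨅ b ∈ s, a + b) :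
    AddLeftMono V := by
  refine ⟨fun c a b hab => ?_⟩
  calc c + a = c + sInf {a, b} := by rw [sInf_pair, inf_eq_left.mpr hab]
    _ = ⨅ r ∈ ({a, b} : Set V), c + r := hdist c _
    _ ≤ c + b := iInf₂_le b (Set.mem_insert_of_mem a (Set.mem_singleton b))

theorem qsub_le_of_le_add {q p r : V} (h : q ≤ p + r) : qsub q p ≤ r :=
  sInf_le h

theorem le_add_qsub (hdist : ∀ (a : V) (s : Set V), a + sInf s = ⨅ b ∈ s, a + b) (q p : V) :
    q ≤ p + qsub q p := by
  rw [qsub, hdist]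
  exact le_iInf₂ fun _ hr => hr

theorem qsub_self (hbot : (⊥ : V) = 0) (x : V) : qsub x x = 0 :=
  le_antisymm (qsub_le_of_le_add (add_zero x).ge) (hbot ▸ bot_le)

theorem qsub_le_qsub_add_qsub (hdist : ∀ (a : V) (s : Set V), a + sInf s = ⨅ b ∈ s, a + b)
    (x y z : V) : qsub y x ≤ qsub z x + qsub y z := by
  have := addLeftMono_of_add_sInf hdist
  refine qsub_le_of_le_add ?_
  calc y ≤ z + qsub y z := le_add_qsub hdist y z
    _ ≤ x + qsub z x + qsub y z := add_le_add_left (le_add_qsub hdist z x) _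
    _ = x + (qsub z x + qsub y z) := add_assoc _ _ _

theorem le_of_qsub_add_qsub_eq_zero (hbot : (⊥ : V) = 0)
    (hdist : ∀ (a : V) (s : Set V), a + sInf s = ⨅ b ∈ s, a + b) {x y : V}
    (h : qsub y x + qsub x y = 0) : y ≤ x := by
  have := addLeftMono_of_add_sInf hdist
  have hzero : qsub y x = 0 :=
    le_antisymm (h ▸ le_add_of_nonneg_right (hbot ▸ bot_le)) (hbot ▸ bot_le)
  simpa only [hzero, add_zero] using le_add_qsub hdist y x

end Quantale

/-- The map d(x,y) = (y ∸ x) + (x ∸ y) is a V-metric on V. -/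
theorem quantale_self_metric {V : Type*} [CompleteLattice V] [AddCommMonoid V]
    (hbot : (⊥ : V) = 0)
    (hdist : ∀ (a : V) (s : Set V), a + sInf s = ⨅ b ∈ s, a + b) :
    (∀ x : V, qsub x x + qsub x x = 0) ∧
    (∀ x y : V, qsub y x + qsub x y = qsub x y + qsub y x) ∧
    (∀ x y z : V, qsub y x + qsub x y ≤ (qsub z x + qsub x z) + (qsub y z + qsub z y)) ∧
    (∀ x y : V, qsub y x + qsub x y = 0 → x = y) := by
  have := addLeftMono_of_add_sInf hdist
  refine ⟨fun x => by rw [qsub_self hbot, add_zero], fun _ _ => add_comm _ _, ?_, ?_⟩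
  · intro x y z
    calc qsub y x + qsub x y ≤ (qsub z x + qsub y z) + (qsub z y + qsub x z) :=
          add_le_add (qsub_le_qsub_add_qsub hdist x y z) (qsub_le_qsub_add_qsub hdist y x z)
      _ = (qsub z x + qsub x z) + (qsub y z + qsub z y) := by abel
  · intro x y h
    exact le_antisymm (le_of_qsub_add_qsub_eq_zero hbot hdist (add_comm (qsub y x) _ ▸ h))
      (le_of_qsub_add_qsub_eq_zero hbot hdist h)
end
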